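/- arXiv:1707.01811 — 3 statements merged into one kernel-verified Lean document; each statement's English description precedes it below -/
import Mathlib

section
/- Fix 0 < λ and let b, b₁, b₂, … be i.i.d. random variables taking values in (1-λ, 1) ∩ (0,1), with λ - 1 + b > 0 almost surely. For each integer k ≥ 1 define B_λ(k) = E[(λ+k)·b / (λ-1+b+∑_{i=1}^k bᵢ)]. Then B_λ(k+1) - B_λ(k) has the same strict sign as λ - 1: the sequence (B_λ(k)) is strictly decreasing if 0 < λ < 1, constant equal to 1 if λ = 1, and strictly increasing if λ > 1. -/
/-!
Write `Sₙ = λ - 1 + b₀ + ⋯ + bₙ₋₁`. By exchangeability `E[bⱼ / Sₙ]` is the same for all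
`j < n`, and summing over `j` gives `n E[b₀ / Sₙ] + E[(λ - 1) / Sₙ] = 1`. Subtracting this
identity for `n = k + 1` from the one for `n = k + 2` cancels the symmetric terms and leaves
`B(k+1) - B(k) = (λ - 1) E[b_{k+1} (1 - b₀) / (S_{k+2} S_{k+1})]`, the expectation of an
a.s. positive variable. For `λ = 1` the identity reads `B(k) = (k + 1) E[b₀ / S_{k+1}] = 1`.
-/

open MeasureTheory ProbabilityTheory Finset

lemma Finset.add_sum_Icc_one_eq_sum_range {M : Type*} [AddCommMonoid M] (f : ℕ → M) (k : ℕ) :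
    f 0 + ∑ i ∈ Icc 1 k, f i = ∑ i ∈ range (k + 1), f i := by
  rw [range_eq_Ico, sum_eq_sum_Ico_succ_bot (Nat.succ_pos k), zero_add, Nat.succ_eq_add_one,
    Ico_add_one_right_eq_Icc]

lemma MeasureTheory.integral_pos_of_ae_pos {α : Type*} [MeasurableSpace α] {μ : Measure α}
    [NeZero μ] {f : α → ℝ} (hf : Integrable f μ) (h : ∀ᵐ x ∂μ, 0 < f x) :
    0 < ∫ x, f x ∂μ := by
  rw [integral_pos_iff_support_of_nonneg_ae (h.mono fun _ hx => hx.le) hf, pos_iff_ne_zero]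
  intro hsupp
  obtain ⟨x, hx, hx0⟩ := (h.and (measure_eq_zero_iff_ae_notMem.mp hsupp)).exists
  exact hx0 hx.ne'

lemma ProbabilityTheory.iIndepFun.identDistrib_comp_injective {Ω ι κ β : Type*}
    [MeasurableSpace Ω] {μ : Measure Ω} [Fintype κ] [MeasurableSpace β] {X : ι → Ω → β} {i₀ : ι}
    (hmeas : ∀ i, Measurable (X i)) (hindep : iIndepFun X μ)
    (hident : ∀ i, IdentDistrib (X i) (X i₀) μ μ) {f g : κ → ι}
    (hf : f.Injective) (hg : g.Injective) :
    IdentDistrib (fun ω k => X (f k) ω) (fun ω k => X (g k) ω) μ μ where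
  aemeasurable_fst := (measurable_pi_lambda _ fun k => hmeas (f k)).aemeasurable
  aemeasurable_snd := (measurable_pi_lambda _ fun k => hmeas (g k)).aemeasurable
  map_eq := by
    rw [(hindep.precomp hf).map_fun_eq_pi_map fun k => (hmeas _).aemeasurable,
      (hindep.precomp hg).map_fun_eq_pi_map fun k => (hmeas _).aemeasurable]
    simp only [(hident _).map_eq]

section ShiftedPartialSum

variable {Ω : Type*} {b : ℕ → Ω → ℝ}

/-- With `c = λ - 1` this is the `Sₙ` of the header. -/
def shiftedPartialSum (c : ℝ) (b : ℕ → Ω → ℝ) (n : ℕ) (ω : Ω) : ℝ :=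
  c + ∑ i ∈ range n, b i ω

lemma shiftedPartialSum_succ_pos {lam : ℝ} {ω : Ω} (h₀ : 1 - lam < b 0 ω)
    (hb : ∀ i, 0 ≤ b i ω) (n : ℕ) : 0 < shiftedPartialSum (lam - 1) b (n + 1) ω := by
  have := sum_nonneg fun i (_ : i ∈ range n) => hb (i + 1)
  rw [shiftedPartialSum, sum_range_succ']
  linarith

variable [MeasurableSpace Ω] {μ : Measure Ω}

lemma identDistrib_div_shiftedPartialSum (hmeas : ∀ i, Measurable (b i))
    (hindep : iIndepFun b μ) (hident : ∀ i, IdentDistrib (b i) (b 0) μ μ) (c : ℝ)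
    {n j l : ℕ} (hj : j < n) (hl : l < n) :
    IdentDistrib (fun ω => b j ω / shiftedPartialSum c b n ω)
      (fun ω => b l ω / shiftedPartialSum c b n ω) μ μ := by
  let σ := Equiv.swap (⟨j, hj⟩ : Fin n) ⟨l, hl⟩
  have hlaw := hindep.identDistrib_comp_injective hmeas hident
    (f := fun i => (σ i : ℕ)) (Fin.val_injective.comp σ.injective) Fin.val_injective
  have hg : Measurable fun x : Fin n → ℝ => x ⟨l, hl⟩ / (c + ∑ i, x i) :=
    (measurable_pi_apply _).div (measurable_const.add (by fun_prop))
  convert hlaw.comp hg using 1 <;> funext ω <;>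
    simp only [shiftedPartialSum, Function.comp_apply, Equiv.sum_comp σ (fun i => b i ω),
      Fin.sum_univ_eq_sum_range (fun i => b i ω)]
  simp [σ]

lemma integral_div_shiftedPartialSum [IsProbabilityMeasure μ] (hmeas : ∀ i, Measurable (b i))
    (hindep : iIndepFun b μ) (hident : ∀ i, IdentDistrib (b i) (b 0) μ μ) (c : ℝ) (n : ℕ)
    (hS : ∀ᵐ ω ∂μ, shiftedPartialSum c b n ω ≠ 0)
    (hint : Integrable (fun ω => b 0 ω / shiftedPartialSum c b n ω) μ) :
    Integrable (fun ω => c / shiftedPartialSum c b n ω) μ ∧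
      n * ∫ ω, b 0 ω / shiftedPartialSum c b n ω ∂μ +
        ∫ ω, c / shiftedPartialSum c b n ω ∂μ = 1 := by
  have hterm : ∀ j ∈ range n,
      Integrable (fun ω => b j ω / shiftedPartialSum c b n ω) μ ∧
      ∫ ω, b j ω / shiftedPartialSum c b n ω ∂μ = ∫ ω, b 0 ω / shiftedPartialSum c b n ω ∂μ := by
    intro j hj
    have hj := mem_range.mp hj
    have h := identDistrib_div_shiftedPartialSum hmeas hindep hident c hj
      (hj.trans_le' (Nat.zero_le j))
    exact ⟨h.integrable_iff.mpr hint, h.integral_eq⟩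
  have hsum : (fun ω => c / shiftedPartialSum c b n ω) =ᵐ[μ]
      fun ω => 1 - ∑ j ∈ range n, b j ω / shiftedPartialSum c b n ω := by
    filter_upwards [hS] with ω hω
    rw [← sum_div, eq_sub_iff_add_eq, ← add_div, ← shiftedPartialSum, div_self hω]
  have hint_sum := integrable_finsetSum _ fun j hj => (hterm j hj).1
  refine ⟨((integrable_const 1).sub hint_sum).congr hsum.symm, ?_⟩
  rw [integral_congr_ae hsum, integral_sub (integrable_const 1) hint_sum,
    integral_finsetSum _ fun j hj => (hterm j hj).1, sum_congr rfl fun j hj => (hterm j hj).2]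
  simp

lemma const_mul_integral_div_shiftedPartialSum_sub [IsProbabilityMeasure μ]
    (hmeas : ∀ i, Measurable (b i)) (hindep : iIndepFun b μ)
    (hident : ∀ i, IdentDistrib (b i) (b 0) μ μ) (lam : ℝ) (k : ℕ)
    (hS₁ : ∀ᵐ ω ∂μ, shiftedPartialSum (lam - 1) b (k + 1) ω ≠ 0)
    (hS₂ : ∀ᵐ ω ∂μ, shiftedPartialSum (lam - 1) b (k + 2) ω ≠ 0)
    (hu₁ : Integrable (fun ω => b 0 ω / shiftedPartialSum (lam - 1) b (k + 1) ω) μ)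
    (hu₂ : Integrable (fun ω => b 0 ω / shiftedPartialSum (lam - 1) b (k + 2) ω) μ) :
    Integrable (fun ω => (lam - 1) * (b (k + 1) ω * (1 - b 0 ω) /
      (shiftedPartialSum (lam - 1) b (k + 2) ω * shiftedPartialSum (lam - 1) b (k + 1) ω))) μ ∧
    (lam + (k + 1 : ℕ)) * ∫ ω, b 0 ω / shiftedPartialSum (lam - 1) b (k + 2) ω ∂μ -
        (lam + k) * ∫ ω, b 0 ω / shiftedPartialSum (lam - 1) b (k + 1) ω ∂μ =
      ∫ ω, (lam - 1) * (b (k + 1) ω * (1 - b 0 ω) /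
        (shiftedPartialSum (lam - 1) b (k + 2) ω * shiftedPartialSum (lam - 1) b (k + 1) ω))
        ∂μ := by
  obtain ⟨hc₁, e₁⟩ := integral_div_shiftedPartialSum hmeas hindep hident (lam - 1) (k + 1) hS₁ hu₁
  obtain ⟨hc₂, e₂⟩ := integral_div_shiftedPartialSum hmeas hindep hident (lam - 1) (k + 2) hS₂ hu₂
  have hpt : (fun ω => (lam - 1) * (b (k + 1) ω * (1 - b 0 ω) /
      (shiftedPartialSum (lam - 1) b (k + 2) ω * shiftedPartialSum (lam - 1) b (k + 1) ω))) =ᵐ[μ]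
      fun ω => (lam - 1) * (b 0 ω / shiftedPartialSum (lam - 1) b (k + 2) ω -
          b 0 ω / shiftedPartialSum (lam - 1) b (k + 1) ω) +
        ((lam - 1) / shiftedPartialSum (lam - 1) b (k + 1) ω -
          (lam - 1) / shiftedPartialSum (lam - 1) b (k + 2) ω) := by
    filter_upwards [hS₁, hS₂] with ω h₁ h₂
    simp only [shiftedPartialSum, sum_range_succ _ (k + 1)] at h₁ h₂ ⊢
    field_simp
    ring
  have hu : Integrable (fun ω => (lam - 1) * (b 0 ω / shiftedPartialSum (lam - 1) b (k + 2) ω -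
      b 0 ω / shiftedPartialSum (lam - 1) b (k + 1) ω)) μ := (hu₂.sub hu₁).const_mul _
  have hc : Integrable (fun ω => (lam - 1) / shiftedPartialSum (lam - 1) b (k + 1) ω -
      (lam - 1) / shiftedPartialSum (lam - 1) b (k + 2) ω) μ := hc₁.sub hc₂
  refine ⟨(hu.add hc).congr hpt.symm, ?_⟩
  rw [integral_congr_ae hpt, integral_add hu hc, integral_const_mul, integral_sub hu₂ hu₁,
    integral_sub hc₁ hc₂]
  push_cast at e₁ e₂ ⊢
  linear_combination e₂ - e₁

end ShiftedPartialSum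

theorem stmt_6_general {Ω : Type*} [MeasurableSpace Ω] (μ : Measure Ω) [IsProbabilityMeasure μ]
    (lam : ℝ) (hlam : 0 < lam)
    (b : ℕ → Ω → ℝ) (hmeas : ∀ i, Measurable (b i))
    (hval : ∀ i, ∀ᵐ ω ∂μ, b i ω ∈ Set.Ioo (1 - lam) 1 ∩ Set.Ioo (0 : ℝ) 1)
    (hindep : iIndepFun b μ)
    (hident : ∀ i, IdentDistrib (b i) (b 0) μ μ)
    (B : ℕ → ℝ)
    (hB : ∀ k, B k = ∫ ω, (lam + k) * b 0 ω /
      (lam - 1 + b 0 ω + ∑ i ∈ Icc 1 k, b i ω) ∂μ)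
    (hint : ∀ k, Integrable (fun ω => (lam + k) * b 0 ω /
      (lam - 1 + b 0 ω + ∑ i ∈ Icc 1 k, b i ω)) μ) :
    ∀ k : ℕ, 1 ≤ k →
      (lam < 1 → B (k + 1) < B k) ∧ (lam = 1 → B k = 1) ∧ (1 < lam → B k < B (k + 1)) := by
  intro k _
  set S := shiftedPartialSum (lam - 1) b
  have hden : ∀ n ω, lam - 1 + b 0 ω + ∑ i ∈ Icc 1 n, b i ω = S (n + 1) ω := fun n ω => by
    rw [add_assoc, add_sum_Icc_one_eq_sum_range (fun i => b i ω)]; rfl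
  simp_rw [hden, mul_div_assoc] at hB hint
  have hu : ∀ n : ℕ, Integrable (fun ω => b 0 ω / S (n + 1) ω) μ :=
    fun n => (integrable_const_mul_iff (isUnit_iff_ne_zero.mpr (by positivity)) _).mp (hint n)
  have hbd := ae_all_iff.mpr hval
  have hS : ∀ n, ∀ᵐ ω ∂μ, 0 < S (n + 1) ω := fun n => by
    filter_upwards [hbd] with ω hω
    exact shiftedPartialSum_succ_pos (hω 0).1.1 (fun i => (hω i).2.1.le) n
  obtain ⟨hfin, hdiff⟩ := const_mul_integral_div_shiftedPartialSum_sub hmeas hindep hident lam k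
    ((hS k).mono fun _ h => h.ne') ((hS (k + 1)).mono fun _ h => h.ne') (hu k) (hu (k + 1))
  rw [← integral_const_mul, ← integral_const_mul, ← hB, ← hB, integral_const_mul] at hdiff
  have hfrac : ∀ᵐ ω ∂μ, 0 < b (k + 1) ω * (1 - b 0 ω) / (S (k + 2) ω * S (k + 1) ω) := by
    filter_upwards [hbd, hS k, hS (k + 1)] with ω hω h₁ h₂
    have := (hω 0).2.2
    have := (hω (k + 1)).2.1
    positivity
  have hfrac_int : lam ≠ 1 → 0 < ∫ ω, b (k + 1) ω * (1 - b 0 ω) / (S (k + 2) ω * S (k + 1) ω) ∂μ :=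
    fun hne => integral_pos_of_ae_pos
      ((integrable_const_mul_iff (isUnit_iff_ne_zero.mpr (sub_ne_zero.mpr hne)) _).mp hfin) hfrac
  refine ⟨fun hlt => ?_, fun heq => ?_, fun hgt => ?_⟩
  · nlinarith [hfrac_int hlt.ne]
  · obtain ⟨-, e⟩ : _ ∧ ((k + 1 : ℕ) : ℝ) * ∫ ω, b 0 ω / S (k + 1) ω ∂μ +
        ∫ ω, (lam - 1) / S (k + 1) ω ∂μ = 1 :=
      integral_div_shiftedPartialSum hmeas hindep hident (lam - 1) (k + 1)
        ((hS k).mono fun _ h => h.ne') (hu k)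
    rw [heq, sub_self] at e
    rw [hB, integral_const_mul, heq]
    simp only [zero_div, integral_zero, add_zero] at e
    push_cast at e
    linarith
  · nlinarith [hfrac_int hgt.ne']

theorem stmt_6 {Ω : Type*} [MeasurableSpace Ω] (μ : Measure Ω) [IsProbabilityMeasure μ]
    (lam : ℝ) (hlam : 0 < lam)
    (b : ℕ → Ω → ℝ) (hmeas : ∀ i, Measurable (b i))
    (hval : ∀ i, ∀ᵐ ω ∂μ, b i ω ∈ Set.Ioo (1 - lam) 1 ∩ Set.Ioo (0 : ℝ) 1)
    (hpos : ∀ᵐ ω ∂μ, lam - 1 + b 0 ω > 0)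
    (hindep : iIndepFun b μ)
    (hident : ∀ i, IdentDistrib (b i) (b 0) μ μ)
    (B : ℕ → ℝ)
    (hB : ∀ k, B k = ∫ ω, (lam + k) * b 0 ω /
      (lam - 1 + b 0 ω + ∑ i ∈ Icc 1 k, b i ω) ∂μ)
    (hint : ∀ k, Integrable (fun ω => (lam + k) * b 0 ω /
      (lam - 1 + b 0 ω + ∑ i ∈ Icc 1 k, b i ω)) μ) :
    ∀ k : ℕ, 1 ≤ k →
      (lam < 1 → B (k + 1) < B k) ∧ (lam = 1 → B k = 1) ∧ (1 < lam → B k < B (k + 1)) :=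
  stmt_6_general μ lam hlam b hmeas hval hindep hident B hB hint
end

section
/- Let ν be a non-degenerate positive-integer-valued random variable with finite mean, and let A : ℕ → ℝ be such that A is strictly increasing and k ↦ A(k)/k is strictly decreasing. Let ν̂ have the size-biased distribution of ν, i.e., P(ν̂ = k) = k·P(ν = k)/E[ν]. Then E[A(ν̂)] < E[ν̂]·E[A(ν̂)/ν̂] (assuming all expectations are finite). -/
/-!
Write `A(ν̂) = ν̂ · ψ(ν̂)` with `ψ k = A k / k`. Since `ν̂ ≥ 1` a.s., the functions `k ↦ k` and `ψ`
vary in opposite directions on the values of `ν̂`, so for an independent copy `ν̂'` the product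
`(ν̂ - ν̂')(ψ ν̂ - ψ ν̂')` is a.s. nonpositive; its expectation is twice the covariance of `ν̂` and
`ψ(ν̂)`. It is strictly negative because the non-degenerate `ν ≥ 1` has two distinct atoms, which
are also atoms of `ν̂`.
-/

open MeasureTheory

section Chebyshev

variable {Ω : Type*} [MeasurableSpace Ω] {μ : Measure Ω} [IsProbabilityMeasure μ] {f g : Ω → ℝ}

lemma integrable_prod_sub_mul_sub (hf : Integrable f μ) (hg : Integrable g μ)
    (hfg : Integrable (fun ω => f ω * g ω) μ) :
    Integrable (fun p : Ω × Ω => (f p.1 - f p.2) * (g p.1 - g p.2)) (μ.prod μ) := by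
  have expand : (fun p : Ω × Ω => (f p.1 - f p.2) * (g p.1 - g p.2)) = fun p =>
      f p.1 * g p.1 - f p.1 * g p.2 - g p.1 * f p.2 + f p.2 * g p.2 := by
    funext p; ring
  rw [expand]
  exact (((hfg.comp_fst μ).sub (hf.mul_prod hg)).sub (hg.mul_prod hf)).add (hfg.comp_snd μ)

lemma integral_prod_sub_mul_sub (hf : Integrable f μ) (hg : Integrable g μ)
    (hfg : Integrable (fun ω => f ω * g ω) μ) :
    ∫ p, (f p.1 - f p.2) * (g p.1 - g p.2) ∂μ.prod μ
      = 2 * (∫ ω, f ω * g ω ∂μ - (∫ ω, f ω ∂μ) * ∫ ω, g ω ∂μ) := by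
  have expand : (fun p : Ω × Ω => (f p.1 - f p.2) * (g p.1 - g p.2)) = fun p =>
      f p.1 * g p.1 - f p.1 * g p.2 - g p.1 * f p.2 + f p.2 * g p.2 := by
    funext p; ring
  have h₁ := hfg.comp_fst μ
  have h₂ := hf.mul_prod hg
  have h₃ := hg.mul_prod hf
  rw [expand, integral_add ((h₁.sub' h₂).sub' h₃) (hfg.comp_snd μ), integral_sub (h₁.sub' h₂) h₃,
    integral_sub h₁ h₂, integral_fun_fst (fun ω => f ω * g ω),
    integral_fun_snd (fun ω => f ω * g ω), integral_prod_mul f g, integral_prod_mul g f,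
    probReal_univ, one_smul]
  ring

/-- Chebyshev's integral inequality, in strict form. -/
theorem integral_mul_lt_integral_mul_integral_of_antivaryOn {s : Set Ω}
    (hs : ∀ᵐ ω ∂μ, ω ∈ s) (hanti : AntivaryOn f g s)
    (hstrict : μ.prod μ {p | (f p.1 - f p.2) * (g p.1 - g p.2) < 0} ≠ 0)
    (hf : Integrable f μ) (hg : Integrable g μ) (hfg : Integrable (fun ω => f ω * g ω) μ) :
    ∫ ω, f ω * g ω ∂μ < (∫ ω, f ω ∂μ) * ∫ ω, g ω ∂μ := by
  set F : Ω × Ω → ℝ := fun p => (f p.1 - f p.2) * (g p.1 - g p.2) with hF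
  have hF_nonpos : ∀ᵐ p ∂μ.prod μ, F p ≤ 0 := by
    filter_upwards [Measure.quasiMeasurePreserving_fst.ae hs,
      Measure.quasiMeasurePreserving_snd.ae hs] with p h₁ h₂
    exact hanti.sub_mul_sub_nonpos h₂ h₁
  have hF_neg : 0 < ∫ p, -F p ∂μ.prod μ := by
    refine (integral_pos_iff_support_of_nonneg_ae ?_ (integrable_prod_sub_mul_sub hf hg hfg).neg).2
      (pos_iff_ne_zero.2 fun h0 => hstrict (measure_mono_null ?_ h0))
    · filter_upwards [hF_nonpos] with p hp
      simpa using hp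
    · exact fun p (hp : F p < 0) => neg_ne_zero.2 hp.ne
  rw [integral_neg, hF, integral_prod_sub_mul_sub hf hg hfg] at hF_neg
  linarith

end Chebyshev

lemma StrictMonoOn.sub_mul_sub_neg_of_strictAntiOn {α : Type*} [LinearOrder α] {s : Set α}
    {φ ψ : α → ℝ} (hφ : StrictMonoOn φ s) (hψ : StrictAntiOn ψ s) {a b : α} (ha : a ∈ s)
    (hb : b ∈ s) (hab : a ≠ b) : (φ a - φ b) * (ψ a - ψ b) < 0 := by
  rcases hab.lt_or_gt with h | h
  · exact mul_neg_of_neg_of_pos (sub_neg.2 (hφ ha hb h)) (sub_pos.2 (hψ ha hb h))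
  · exact mul_neg_of_pos_of_neg (sub_pos.2 (hφ hb ha h)) (sub_neg.2 (hψ hb ha h))

section Atoms

variable {Ω α : Type*} [MeasurableSpace Ω] {μ : Measure Ω} [Countable α]

lemma ae_measure_preimage_singleton_ne_zero (X : Ω → α) : ∀ᵐ ω ∂μ, μ (X ⁻¹' {X ω}) ≠ 0 :=
  measure_mono_null (fun ω hω => Set.mem_iUnion.2 ⟨⟨X ω, not_not.1 hω⟩, rfl⟩)
    (measure_iUnion_null fun a : {a // μ (X ⁻¹' {a}) = 0} => a.2)

lemma exists_measure_preimage_singleton_ne_zero [NeZero μ] (X : Ω → α) :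
    ∃ a, μ (X ⁻¹' {a}) ≠ 0 :=
  let ⟨ω, hω⟩ := (ae_measure_preimage_singleton_ne_zero (μ := μ) X).exists
  ⟨X ω, hω⟩

lemma exists_ne_measure_preimage_singleton_ne_zero [NeZero μ] {X : Ω → α}
    (hX : ¬ ∃ c, ∀ᵐ ω ∂μ, X ω = c) :
    ∃ a b, a ≠ b ∧ μ (X ⁻¹' {a}) ≠ 0 ∧ μ (X ⁻¹' {b}) ≠ 0 := by
  have hatoms := ae_measure_preimage_singleton_ne_zero (μ := μ) X
  obtain ⟨ω₀, h₀⟩ := hatoms.exists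
  have hmoves : ∃ᶠ ω in ae μ, X ω ≠ X ω₀ := Filter.not_eventually.1 fun h => hX ⟨X ω₀, h⟩
  obtain ⟨ω₁, hne, h₁⟩ := (hmoves.and_eventually hatoms).exists
  exact ⟨X ω₁, X ω₀, hne, h₁, h₀⟩

end Atoms

section SizeBiased

variable {Ω Ω' : Type*} [MeasurableSpace Ω] [MeasurableSpace Ω']

def IsSizeBiased (μ : Measure Ω) (ν : Ω → ℕ) (μ' : Measure Ω') (ν' : Ω' → ℕ) : Prop :=
  ∀ k : ℕ, (μ' {ω | ν' ω = k}).toReal = k * (μ {ω | ν ω = k}).toReal / ∫ ω, (ν ω : ℝ) ∂μ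

variable {μ : Measure Ω} {ν : Ω → ℕ} {μ' : Measure Ω'} {ν' : Ω' → ℕ}

lemma IsSizeBiased.measure_preimage_zero [IsFiniteMeasure μ'] (h : IsSizeBiased μ ν μ' ν') :
    μ' {ω | ν' ω = 0} = 0 := by
  have := h 0
  rw [Nat.cast_zero, zero_mul, zero_div, ENNReal.toReal_eq_zero_iff] at this
  exact this.resolve_right (measure_ne_top μ' _)

lemma IsSizeBiased.integral_pos [IsProbabilityMeasure μ'] (h : IsSizeBiased μ ν μ' ν') :
    0 < ∫ ω, (ν ω : ℝ) ∂μ := by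
  refine (integral_nonneg fun ω => Nat.cast_nonneg (ν ω)).lt_of_ne fun hzero => ?_
  obtain ⟨k, hk⟩ := exists_measure_preimage_singleton_ne_zero (μ := μ') ν'
  have := h k
  rw [← hzero, div_zero, ENNReal.toReal_eq_zero_iff] at this
  exact this.elim hk (measure_ne_top μ' _)

lemma IsSizeBiased.measure_preimage_ne_zero [IsFiniteMeasure μ] [IsProbabilityMeasure μ']
    (h : IsSizeBiased μ ν μ' ν') {k : ℕ} (hk : 0 < k) (hμk : μ {ω | ν ω = k} ≠ 0) :
    μ' {ω | ν' ω = k} ≠ 0 := by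
  have hpos : 0 < (μ' {ω | ν' ω = k}).toReal := by
    rw [h k]
    have hμk_pos := ENNReal.toReal_pos hμk (measure_ne_top μ _)
    have hmean_pos := h.integral_pos
    positivity
  exact fun h0 => by simp [h0] at hpos

lemma IsSizeBiased.exists_ne_measure_preimage_ne_zero [IsProbabilityMeasure μ]
    [IsProbabilityMeasure μ'] (h : IsSizeBiased μ ν μ' ν') (hpos : ∀ ω, 1 ≤ ν ω)
    (hnondeg : ¬ ∃ c : ℕ, ∀ᵐ ω ∂μ, ν ω = c) :
    ∃ a b, a ≠ b ∧ 1 ≤ a ∧ 1 ≤ b ∧ μ' {ω | ν' ω = a} ≠ 0 ∧ μ' {ω | ν' ω = b} ≠ 0 := by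
  obtain ⟨a, b, hab, ha, hb⟩ := exists_ne_measure_preimage_singleton_ne_zero hnondeg
  have hatom_pos : ∀ k, μ (ν ⁻¹' {k}) ≠ 0 → 1 ≤ k := fun k hk =>
    let ⟨ω, (hω : ν ω = k)⟩ := nonempty_of_measure_ne_zero hk
    hω ▸ hpos ω
  exact ⟨a, b, hab, hatom_pos a ha, hatom_pos b hb,
    h.measure_preimage_ne_zero (hatom_pos a ha) ha, h.measure_preimage_ne_zero (hatom_pos b hb) hb⟩

end SizeBiased

theorem stmt_9_general {Ω Ω' : Type*} [MeasurableSpace Ω] [MeasurableSpace Ω']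
    (μ : Measure Ω) [IsProbabilityMeasure μ] (μ' : Measure Ω') [IsProbabilityMeasure μ']
    (ν : Ω → ℕ) (hpos : ∀ ω, 1 ≤ ν ω)
    (hnondeg : ¬ ∃ c : ℕ, ∀ᵐ ω ∂μ, ν ω = c)
    (ν' : Ω' → ℕ)
    (hsb : ∀ k : ℕ, (μ' {ω | ν' ω = k}).toReal
      = k * (μ {ω | ν ω = k}).toReal / ∫ ω, (ν ω : ℝ) ∂μ)
    (A : ℕ → ℝ)
    (hAdec : ∀ j k : ℕ, 1 ≤ j → j < k → A k / k < A j / j)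
    (hint1 : Integrable (fun ω => A (ν' ω)) μ')
    (hint2 : Integrable (fun ω => (ν' ω : ℝ)) μ')
    (hint3 : Integrable (fun ω => A (ν' ω) / (ν' ω : ℝ)) μ') :
    ∫ ω, A (ν' ω) ∂μ' < (∫ ω, (ν' ω : ℝ) ∂μ') * ∫ ω, A (ν' ω) / (ν' ω : ℝ) ∂μ' := by
  have hν' : IsSizeBiased μ ν μ' ν' := hsb
  obtain ⟨a, b, hab, ha, hb, ha', hb'⟩ := hν'.exists_ne_measure_preimage_ne_zero hpos hnondeg
  have hν'_pos : ∀ᵐ ω ∂μ', ν' ω ∈ {k | 1 ≤ k} := by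
    simpa [ae_iff, Nat.lt_one_iff] using hν'.measure_preimage_zero
  set ψ : ℕ → ℝ := fun k => A k / k
  have hψ_anti : StrictAntiOn ψ {k | 1 ≤ k} := fun j hj k _ hjk => hAdec j k hj hjk
  have hcast_mono : StrictMonoOn (Nat.cast : ℕ → ℝ) {k | 1 ≤ k} := Nat.strictMono_cast.strictMonoOn _
  have hcancel : (fun ω => (ν' ω : ℝ) * ψ (ν' ω)) =ᵐ[μ'] fun ω => A (ν' ω) :=
    hν'_pos.mono fun ω (hω : 1 ≤ ν' ω) => mul_div_cancel₀ _ (by positivity)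
  have hstrict :
      μ'.prod μ' {p | ((ν' p.1 : ℝ) - ν' p.2) * (ψ (ν' p.1) - ψ (ν' p.2)) < 0} ≠ 0 := by
    refine fun h0 => mul_ne_zero ha' hb' ?_
    rw [← Measure.prod_prod]
    refine measure_mono_null (fun p ⟨(h₁ : ν' p.1 = a), (h₂ : ν' p.2 = b)⟩ => ?_) h0
    show (_ : ℝ) < 0
    rw [h₁, h₂]
    exact hcast_mono.sub_mul_sub_neg_of_strictAntiOn hψ_anti ha hb hab
  have hcov := integral_mul_lt_integral_mul_integral_of_antivaryOn
    (f := fun ω => (ν' ω : ℝ)) (g := fun ω => ψ (ν' ω)) hν'_pos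
    ((hcast_mono.monotoneOn.antivaryOn hψ_anti.antitoneOn).comp_right ν') hstrict
    hint2 hint3 (hint1.congr hcancel.symm)
  rwa [integral_congr_ae hcancel] at hcov

theorem stmt_9 {Ω Ω' : Type*} [MeasurableSpace Ω] [MeasurableSpace Ω']
    (μ : Measure Ω) [IsProbabilityMeasure μ] (μ' : Measure Ω') [IsProbabilityMeasure μ']
    (ν : Ω → ℕ) (hmeas : Measurable ν) (hpos : ∀ ω, 1 ≤ ν ω)
    (hnondeg : ¬ ∃ c : ℕ, ∀ᵐ ω ∂μ, ν ω = c)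
    (hint : Integrable (fun ω => (ν ω : ℝ)) μ)
    (ν' : Ω' → ℕ) (hmeas' : Measurable ν')
    (hsb : ∀ k : ℕ, (μ' {ω | ν' ω = k}).toReal
      = k * (μ {ω | ν ω = k}).toReal / ∫ ω, (ν ω : ℝ) ∂μ)
    (A : ℕ → ℝ) (hA : StrictMono A)
    (hAdec : ∀ j k : ℕ, 1 ≤ j → j < k → A k / k < A j / j)
    (hint1 : Integrable (fun ω => A (ν' ω)) μ')
    (hint2 : Integrable (fun ω => (ν' ω : ℝ)) μ')
    (hint3 : Integrable (fun ω => A (ν' ω) / (ν' ω : ℝ)) μ') :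
    ∫ ω, A (ν' ω) ∂μ' < (∫ ω, (ν' ω : ℝ) ∂μ') * ∫ ω, A (ν' ω) / (ν' ω : ℝ) ∂μ' :=
  stmt_9_general μ μ' ν hpos hnondeg ν' hsb A hAdec hint1 hint2 hint3
end

section
/- Let 0 < λ and suppose b, b₁, b₂, …, are i.i.d. (0,1)-valued random variables with λ-1+b > 0 a.s., and let ν be an independent positive-integer-valued random variable with finite mean m. Then E[(λ+ν)·b/(λ-1+b+∑_{i=1}^ν bᵢ)] < λ + m. -/
open MeasureTheory ProbabilityTheory Finset

/-! Pointwise, `(λ + ν) b / (b + (λ - 1 + ∑ bᵢ)) < λ + ν` because `λ - 1 + ∑ bᵢ > 0`;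
integrating a strict a.e. inequality over a probability space keeps it strict. -/

lemma mul_div_add_lt {c x y : ℝ} (hc : 0 < c) (hx : 0 < x) (hy : 0 < y) :
    c * x / (x + y) < c := by
  rw [mul_div_assoc]
  exact mul_lt_of_lt_one_right hc ((div_lt_one (by positivity)).2 (lt_add_of_pos_right x hy))

lemma MeasureTheory.integral_lt_integral_of_ae_lt {α : Type*} [MeasurableSpace α]
    {μ : Measure α} [NeZero μ] {f g : α → ℝ} (hf : Integrable f μ) (hg : Integrable g μ)
    (hfg : ∀ᵐ x ∂μ, f x < g x) :
    ∫ x, f x ∂μ < ∫ x, g x ∂μ := by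
  have hle : f ≤ᵐ[μ] g := hfg.mono fun _ h => h.le
  refine (integral_mono_ae hf hg hle).lt_of_ne fun h => ?_
  obtain ⟨x, hlt, heq⟩ := (hfg.and ((integral_eq_iff_of_ae_le hf hg hle).1 h)).exists
  exact hlt.ne heq

theorem stmt_12_general {Ω : Type*} [MeasurableSpace Ω] (μ : Measure Ω) [IsProbabilityMeasure μ]
    (lam : ℝ) (hlam : 0 < lam)
    (b : ℕ → Ω → ℝ)
    (hval : ∀ i, ∀ᵐ ω ∂μ, b i ω ∈ Set.Ioo (0 : ℝ) 1)
    (ν : Ω → ℕ)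
    (m : ℝ) (hm : m = ∫ ω, (ν ω : ℝ) ∂μ)
    (hνint : Integrable (fun ω => (ν ω : ℝ)) μ)
    (hdenpos : ∀ᵐ ω ∂μ, lam - 1 + ∑ i ∈ Icc 1 (ν ω), b i ω > 0)
    (hint : Integrable (fun ω => (lam + ν ω) * b 0 ω /
      (lam - 1 + b 0 ω + ∑ i ∈ Icc 1 (ν ω), b i ω)) μ) :
    ∫ ω, (lam + ν ω) * b 0 ω /
      (lam - 1 + b 0 ω + ∑ i ∈ Icc 1 (ν ω), b i ω) ∂μ < lam + m := by
  have hbound : ∀ᵐ ω ∂μ, (lam + ν ω) * b 0 ω /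
      (lam - 1 + b 0 ω + ∑ i ∈ Icc 1 (ν ω), b i ω) < lam + ν ω := by
    filter_upwards [hval 0, hdenpos] with ω hb hS
    rw [add_right_comm _ (b 0 ω), add_comm _ (b 0 ω)]
    exact mul_div_add_lt (by positivity) hb.1 hS
  calc _ < ∫ ω, (lam + (ν ω : ℝ)) ∂μ :=
        integral_lt_integral_of_ae_lt hint ((integrable_const lam).add hνint) hbound
    _ = lam + m := by
        rw [integral_add (integrable_const lam) hνint, integral_const, probReal_univ, one_smul, hm]

theorem stmt_12 {Ω : Type*} [MeasurableSpace Ω] (μ : Measure Ω) [IsProbabilityMeasure μ]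
    (lam : ℝ) (hlam : 0 < lam)
    (b : ℕ → Ω → ℝ) (hmeas : ∀ i, Measurable (b i))
    (hval : ∀ i, ∀ᵐ ω ∂μ, b i ω ∈ Set.Ioo (0 : ℝ) 1)
    (hpos : ∀ᵐ ω ∂μ, lam - 1 + b 0 ω > 0)
    (hindep : iIndepFun b μ)
    (hident : ∀ i, IdentDistrib (b i) (b 0) μ μ)
    (ν : Ω → ℕ) (hν : Measurable ν) (hν1 : ∀ ω, 1 ≤ ν ω)
    (hνindep : ∀ i, IndepFun ν (b i) μ)
    (m : ℝ) (hm : m = ∫ ω, (ν ω : ℝ) ∂μ)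
    (hνint : Integrable (fun ω => (ν ω : ℝ)) μ)
    (hdenpos : ∀ᵐ ω ∂μ, lam - 1 + ∑ i ∈ Icc 1 (ν ω), b i ω > 0)
    (hint : Integrable (fun ω => (lam + ν ω) * b 0 ω /
      (lam - 1 + b 0 ω + ∑ i ∈ Icc 1 (ν ω), b i ω)) μ) :
    ∫ ω, (lam + ν ω) * b 0 ω /
      (lam - 1 + b 0 ω + ∑ i ∈ Icc 1 (ν ω), b i ω) ∂μ < lam + m :=
  stmt_12_general μ lam hlam b hval ν m hm hνint hdenpos hint
end
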